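/- For integers m ≥ 0 and n, k, s ≥ 1, one has x₀^m ш (x₀^n x₁^k x₀^s) = Σ_{m₁+m₂+m₃=m, m_i ≥ 0} C(m₁+n-1, n-1) · C(m₃+s-1, s-1) · x₀^{m₁+n} 𝔅_{k+1}^{m₂} x₀^{m₃+s}, an identity of multisets of words, where a binomial coefficient c multiplying a multiset means the multiset repeated c times. -/

import Mathlib

/-- The shuffle product of two words, as a multiset of words. -/
def shuffle {X : Type*} : List X → List X → Multiset (List X)
  | u, [] => {u}
  | [], v => {v}
  | a :: u, b :: v =>
      (shuffle u (b :: v)).map (a :: ·) + (shuffle (a :: u) v).map (b :: ·)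
termination_by u v => u.length + v.length

/-- The two-letter alphabet `X = {x₀, x₁}`. -/
def x0 : Bool := false
def x1 : Bool := true

/-- `𝔅_r^m`: the multiset of all words `x₀^{m₁} x₁ x₀^{m₂} x₁ ⋯ x₁ x₀^{m_r}`
with `m₁ + ⋯ + m_r = m`, `m_i ≥ 0`. -/
def B (r m : ℕ) : Multiset (List Bool) :=
  (Finset.Nat.antidiagonalTuple r m).val.map fun f =>
    List.intercalate [x1] (List.ofFn fun i => List.replicate (f i) x0)

/-- `S w T`: the multiset of all concatenations `u ++ w ++ v` with `u ∈ S`, `v ∈ T`,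
counted with multiplicity. -/
def msConcat {X : Type*} (S : Multiset (List X)) (w : List X) (T : Multiset (List X)) :
    Multiset (List X) :=
  S.bind fun u => T.map fun v => u ++ w ++ v

/-!
Shuffling `x₀^m` into a word `v` distributes the `m` letters among the gaps of `v`. Splitting
`v = x₀^{n-1} x₀ x₁^k x₀ x₀^{s-1}` at the two marked letters `x₀`, the three pieces receive
`m₁ + m₂ + m₃ = m` letters. The outer pieces contribute
`x₀^{m₁} ш x₀^{n-1} = C(m₁+n-1, n-1) · x₀^{m₁+n-1}` and its mirror image, and the middle piece
contributes `x₀^{m₂} ш x₁^k = 𝔅_{k+1}^{m₂}`.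
-/

open Finset

lemma Multiset.map_finsetSum {ι α β : Type*} (f : α → β) (s : Finset ι) (S : ι → Multiset α) :
    (∑ i ∈ s, S i).map f = ∑ i ∈ s, (S i).map f :=
  map_sum (Multiset.mapAddMonoidHom f) S s

namespace Finset.Nat

lemma sum_antidiagonal_antidiagonal_fst {M : Type*} [AddCommMonoid M] (n : ℕ)
    (f : ℕ → ℕ → ℕ → M) :
    ∑ p ∈ antidiagonal n, ∑ q ∈ antidiagonal p.1, f q.1 q.2 p.2 =
      ∑ p ∈ antidiagonal n, ∑ q ∈ antidiagonal p.2, f p.1 q.1 q.2 := by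
  simp only [Finset.sum_sigma']
  apply Finset.sum_nbij' (fun ⟨⟨_, c⟩, ⟨a, b⟩⟩ ↦ ⟨(a, b + c), (b, c)⟩)
    (fun ⟨⟨a, _⟩, ⟨b, c⟩⟩ ↦ ⟨(a + b, c), (a, b)⟩) <;> aesop (add simp [add_assoc])

lemma antidiagonalTuple_succ_val (k n : ℕ) :
    (antidiagonalTuple (k + 1) n).val =
      (antidiagonal n).val.bind fun p => (antidiagonalTuple k p.2).val.map (Fin.cons p.1) := by
  change ((List.Nat.antidiagonalTuple (k + 1) n : List (Fin (k + 1) → ℕ)) :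
    Multiset (Fin (k + 1) → ℕ)) = _
  rw [List.Nat.antidiagonalTuple]
  simp only [← Multiset.coe_bind]
  rfl

lemma sum_antidiagonalTuple_succ {M : Type*} [AddCommMonoid M] (k n : ℕ)
    (f : (Fin (k + 1) → ℕ) → M) :
    ∑ x ∈ antidiagonalTuple (k + 1) n, f x =
      ∑ p ∈ antidiagonal n, ∑ x ∈ antidiagonalTuple k p.2, f (Fin.cons p.1 x) := by
  simp only [Finset.sum_eq_multiset_sum, antidiagonalTuple_succ_val, Multiset.map_bind,
    Multiset.sum_bind, Multiset.map_map, Function.comp_def]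

lemma sum_antidiagonalTuple_three {M : Type*} [AddCommMonoid M] (n : ℕ)
    (f : (Fin 3 → ℕ) → M) :
    ∑ x ∈ antidiagonalTuple 3 n, f x =
      ∑ p ∈ antidiagonal n, ∑ q ∈ antidiagonal p.2, f ![p.1, q.1, q.2] := by
  simp only [sum_antidiagonalTuple_succ 2, sum_antidiagonalTuple_succ 1, antidiagonalTuple_one,
    sum_singleton]
  rfl

end Finset.Nat

section Words

variable {X : Type*}

lemma msConcat_singleton_left (u w : List X) (T : Multiset (List X)) :
    msConcat {u} w T = T.map (u ++ w ++ ·) :=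
  Multiset.singleton_bind _ _

lemma msConcat_nsmul_singleton_left (a : ℕ) (u w : List X) (T : Multiset (List X)) :
    msConcat (a • {u}) w T = a • T.map (u ++ w ++ ·) := by
  simp [msConcat, Multiset.bind, Multiset.join, Multiset.nsmul_singleton]

lemma msConcat_nsmul_singleton_right (b : ℕ) (v w : List X) (S : Multiset (List X)) :
    msConcat S w (b • {v}) = b • S.map (· ++ w ++ v) := by
  induction S using Multiset.induction_on with
  | empty => simp [msConcat]
  | cons u S ih =>
    rw [msConcat] at ih ⊢
    rw [Multiset.cons_bind, ih, Multiset.map_cons, ← Multiset.singleton_add, nsmul_add]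
    simp [Multiset.map_nsmul]

lemma map_append_left_msConcat (u w : List X) (S T : Multiset (List X)) :
    (msConcat S w T).map (u ++ ·) = msConcat (S.map (u ++ ·)) w T := by
  simp [msConcat, Multiset.map_bind, Multiset.bind_map, Multiset.map_map]

lemma msConcat_finsetSum_left {ι : Type*} (s : Finset ι) (S : ι → Multiset (List X))
    (w : List X) (T : Multiset (List X)) :
    msConcat (∑ i ∈ s, S i) w T = ∑ i ∈ s, msConcat (S i) w T :=
  map_sum (⟨⟨fun S => msConcat S w T, Multiset.zero_bind _⟩, fun _ _ => Multiset.add_bind _ _ _⟩ :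
    Multiset (List X) →+ Multiset (List X)) S s

@[simp] lemma shuffle_nil_left (v : List X) : shuffle [] v = {v} := by
  cases v <;> simp [shuffle]

@[simp] lemma shuffle_nil_right (u : List X) : shuffle u [] = {u} := by
  cases u <;> simp [shuffle]

lemma shuffle_cons_cons (a b : X) (u v : List X) :
    shuffle (a :: u) (b :: v) =
      (shuffle u (b :: v)).map (a :: ·) + (shuffle (a :: u) v).map (b :: ·) := by
  rw [shuffle]

theorem shuffle_replicate_replicate (c : X) (a b : ℕ) :
    shuffle (List.replicate a c) (List.replicate b c) =
      (a + b).choose a • {List.replicate (a + b) c} := by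
  induction a generalizing b with
  | zero => simp
  | succ a iha =>
    induction b with
    | zero => simp
    | succ b ihb =>
      rw [List.replicate_succ, List.replicate_succ, shuffle_cons_cons, ← List.replicate_succ,
        ← List.replicate_succ, iha, ihb]
      simp only [Multiset.map_nsmul, Multiset.map_singleton, ← List.replicate_succ,
        Nat.add_succ, Nat.succ_add, ← add_nsmul, Nat.choose_succ_succ]

theorem shuffle_replicate_cons (c b : X) (v : List X) (m : ℕ) :
    shuffle (List.replicate m c) (b :: v) =
      ∑ p ∈ antidiagonal m,
        (shuffle (List.replicate p.2 c) v).map (List.replicate p.1 c ++ [b] ++ ·) := by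
  induction m with
  | zero => simp
  | succ m ih =>
    conv_lhs => rw [List.replicate_succ, shuffle_cons_cons, ← List.replicate_succ, ih]
    rw [Finset.Nat.sum_antidiagonal_succ, add_comm]
    simp [Multiset.map_finsetSum, Multiset.map_map, List.replicate_succ]

theorem shuffle_replicate_append_cons (c b : X) (u v : List X) (m : ℕ) :
    shuffle (List.replicate m c) (u ++ b :: v) =
      ∑ p ∈ antidiagonal m,
        msConcat (shuffle (List.replicate p.1 c) u) [b] (shuffle (List.replicate p.2 c) v) := by
  induction u generalizing m with
  | nil => simp [shuffle_replicate_cons, msConcat_singleton_left]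
  | cons a u ih =>
    simp only [List.cons_append, shuffle_replicate_cons, ih, Multiset.map_finsetSum,
      map_append_left_msConcat, msConcat_finsetSum_left]
    exact (Finset.Nat.sum_antidiagonal_antidiagonal_fst m fun i j l =>
      msConcat ((shuffle (List.replicate j c) u).map (List.replicate i c ++ [a] ++ ·)) [b]
        (shuffle (List.replicate l c) v)).symm

lemma intercalate_ofFn_replicate_cons (sep : List X) (c : X) (a : ℕ) {r : ℕ}
    (y : Fin (r + 1) → ℕ) :
    sep.intercalate (List.ofFn fun i => List.replicate ((Fin.cons a y : Fin (r + 2) → ℕ) i) c) =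
      List.replicate a c ++ sep ++ sep.intercalate (List.ofFn fun i => List.replicate (y i) c) := by
  rw [List.ofFn_succ]
  simp only [Fin.cons_zero, Fin.cons_succ]
  rw [List.ofFn_succ, List.intercalate_cons_cons]

end Words

theorem B_add_two (r m : ℕ) :
    B (r + 2) m =
      ∑ p ∈ antidiagonal m, (B (r + 1) p.2).map (List.replicate p.1 x0 ++ [x1] ++ ·) := by
  rw [B, Finset.Nat.antidiagonalTuple_succ_val, Multiset.map_bind, Finset.sum_eq_multiset_sum]
  simp only [B, Multiset.map_map, Function.comp_def, intercalate_ofFn_replicate_cons]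
  rfl

theorem B_add_one_eq_shuffle (k m : ℕ) :
    B (k + 1) m = shuffle (List.replicate m x0) (List.replicate k x1) := by
  induction k generalizing m with
  | zero => simp [B, List.intercalate]
  | succ k ih => simp only [B_add_two, ih, List.replicate_succ, shuffle_replicate_cons]

theorem shuffle_x0_pow_x0x1x0_general (m n k s : ℕ) (hn : 1 ≤ n) (hs : 1 ≤ s) :
    shuffle (List.replicate m x0)
        (List.replicate n x0 ++ List.replicate k x1 ++ List.replicate s x0) =
      ∑ f ∈ Finset.Nat.antidiagonalTuple 3 m,
        (Nat.choose (f 0 + n - 1) (n - 1) * Nat.choose (f 2 + s - 1) (s - 1)) •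
          (B (k + 1) (f 1)).map
            (fun w => List.replicate (f 0 + n) x0 ++ w ++ List.replicate (f 2 + s) x0) := by
  obtain ⟨n, rfl⟩ := Nat.exists_eq_add_of_le' hn
  obtain ⟨s, rfl⟩ := Nat.exists_eq_add_of_le' hs
  have split : List.replicate (n + 1) x0 ++ List.replicate k x1 ++ List.replicate (s + 1) x0 =
      List.replicate n x0 ++ x0 :: (List.replicate k x1 ++ x0 :: List.replicate s x0) := by
    rw [List.replicate_succ', List.replicate_succ]
    simp
  rw [split, shuffle_replicate_append_cons, Finset.Nat.sum_antidiagonalTuple_three]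
  refine sum_congr rfl fun p _ => ?_
  rw [shuffle_replicate_replicate, msConcat_nsmul_singleton_left, shuffle_replicate_append_cons,
    Multiset.map_finsetSum, smul_sum]
  refine sum_congr rfl fun q _ => ?_
  rw [shuffle_replicate_replicate, msConcat_nsmul_singleton_right, ← B_add_one_eq_shuffle]
  simp only [Matrix.cons_val_zero, Matrix.cons_val_one, Matrix.cons_val_two, Nat.add_succ_sub_one,
    Nat.add_sub_cancel, Multiset.map_nsmul, Multiset.map_map, mul_smul, Nat.choose_symm_add]
  congr 2
  refine Multiset.map_congr rfl fun w _ => ?_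
  rw [← add_assoc, List.replicate_succ', ← add_assoc, List.replicate_succ]
  simp

theorem shuffle_x0_pow_x0x1x0 (m n k s : ℕ) (hn : 1 ≤ n) (hk : 1 ≤ k) (hs : 1 ≤ s) :
    shuffle (List.replicate m x0)
        (List.replicate n x0 ++ List.replicate k x1 ++ List.replicate s x0) =
      ∑ f ∈ Finset.Nat.antidiagonalTuple 3 m,
        (Nat.choose (f 0 + n - 1) (n - 1) * Nat.choose (f 2 + s - 1) (s - 1)) •
          (B (k + 1) (f 1)).map
            (fun w => List.replicate (f 0 + n) x0 ++ w ++ List.replicate (f 2 + s) x0) :=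
  shuffle_x0_pow_x0x1x0_general m n k s hn hs
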